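/- For weakly compact convex sets P, Q of probability measures on a Polish space, JS(P,Q) = 0 if and only if P = Q. -/

import Mathlib

open MeasureTheory Real ENNReal Filter Topology
open scoped Classical

noncomputable def klDiv {X : Type*} [MeasurableSpace X] (μ ν : Measure X) : EReal :=
  if μ ≪ ν ∧ Integrable (fun x => Real.log (μ.rnDeriv ν x).toReal) μ
  then ((∫ x, Real.log (μ.rnDeriv ν x).toReal ∂μ : ℝ) : EReal)
  else ⊤

noncomputable def tvDist {X : Type*} [MeasurableSpace X] (μ ν : Measure X) : ℝ :=
  ⨆ A : {A : Set X // MeasurableSet A}, |(μ A).toReal - (ν A).toReal|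


noncomputable def genKL {X : Type*} [MeasurableSpace X]
    (P Q : Set (ProbabilityMeasure X)) : EReal :=
  ⨆ μ ∈ P, ⨅ ν ∈ Q, klDiv μ.toMeasure ν.toMeasure

noncomputable def genV {X : Type*} [MeasurableSpace X]
    (P Q : Set (ProbabilityMeasure X)) : ℝ :=
  max (⨆ μ : P, ⨅ ν : Q, tvDist μ.1.toMeasure ν.1.toMeasure)
      (⨆ ν : Q, ⨅ μ : P, tvDist μ.1.toMeasure ν.1.toMeasure)

def ConvexPM {X : Type*} [MeasurableSpace X] (P : Set (ProbabilityMeasure X)) : Prop :=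
  ∀ μ ∈ P, ∀ ν ∈ P, ∀ a b : ℝ≥0∞, a + b = 1 →
    ∃ κ ∈ P, κ.toMeasure = a • μ.toMeasure + b • ν.toMeasure

def midSet {X : Type*} [MeasurableSpace X]
    (P Q : Set (ProbabilityMeasure X)) : Set (ProbabilityMeasure X) :=
  {κ | ∃ μ ∈ P, ∃ ν ∈ Q, κ.toMeasure = (2:ℝ≥0∞)⁻¹ • μ.toMeasure + (2:ℝ≥0∞)⁻¹ • ν.toMeasure}

noncomputable def genJS {X : Type*} [MeasurableSpace X]
    (P Q : Set (ProbabilityMeasure X)) : EReal :=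
  ((1/2 : ℝ) : EReal) * genKL P (midSet P Q) + ((1/2 : ℝ) : EReal) * genKL Q (midSet P Q)

/-! `JS(P, Q) = 0` forces both Kullback–Leibler terms to vanish, so every `μ ∈ P` is a limit of
midpoint mixtures `κ` with `KL(μ‖κ) → 0`. A Pinsker-type bound
`|∫ f dμ - ∫ f dκ| ≤ ‖f‖ (2 √KL(μ‖κ) + KL(μ‖κ))` makes this weak convergence, and the set of
midpoints is compact, so `P ⊆ (P + Q) / 2`; likewise `Q ⊆ (P + Q) / 2`.

Writing `μ ∈ P` as `(m + t) / 2` with `m ∈ P`, `t ∈ Q` and unfolding `m` again and again, convexity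
of `Q` merges the `Q`-parts into one `t_k ∈ Q` with `(k + 1) μ = m_k + k t_k`; hence `t_k → μ` and
`μ ∈ Q` because `Q` is closed. Symmetrically `Q ⊆ P`. -/

open InformationTheory hiding klDiv
open scoped BoundedContinuousFunction

lemma sq_sqrt_sub_one_le_klFun {x : ℝ} (hx : 0 ≤ x) : (√x - 1) ^ 2 ≤ klFun x := by
  rcases hx.eq_or_lt with rfl | hx
  · simp [klFun_zero]
  set s := √x
  have hs : 0 < s := Real.sqrt_pos.mpr hx
  have hlog : 1 - s⁻¹ ≤ Real.log s := by
    have := Real.log_le_sub_one_of_pos (inv_pos.mpr hs)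
    rw [Real.log_inv] at this
    linarith
  have hxs : x = s ^ 2 := (Real.sq_sqrt hx.le).symm
  rw [klFun_apply, hxs, Real.log_pow]
  have hmul : s ^ 2 * (1 - s⁻¹) = s ^ 2 - s := by field_simp
  push_cast
  nlinarith [mul_le_mul_of_nonneg_left hlog (sq_nonneg s)]

lemma abs_sub_one_le_klFun {x ε : ℝ} (hx : 0 ≤ x) (hε : 0 < ε) :
    |x - 1| ≤ ε + (1 + ε⁻¹) * klFun x := by
  set u := √x - 1
  have hu : |x - 1| ≤ u ^ 2 + 2 * |u| := by
    have hxu : x - 1 = u * (u + 2) := by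
      have := Real.sq_sqrt hx; simp only [u]; nlinarith
    rw [hxu, abs_mul]
    calc |u| * |u + 2| ≤ |u| * (|u| + 2) := by
          gcongr; exact (abs_add_le u 2).trans (by norm_num)
      _ = u ^ 2 + 2 * |u| := by rw [mul_add, abs_mul_abs_self, sq]; ring
  have hamgm : 2 * |u| ≤ ε + ε⁻¹ * u ^ 2 := by
    have : 2 * |u| * ε ≤ ε * ε + u ^ 2 := by nlinarith [sq_nonneg (|u| - ε), sq_abs u]
    rw [← sub_nonneg]
    have : ε + ε⁻¹ * u ^ 2 - 2 * |u| = (ε * ε + u ^ 2 - 2 * |u| * ε) / ε := by field_simp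
    rw [this]; exact div_nonneg (by linarith) hε.le
  have hkl := sq_sqrt_sub_one_le_klFun hx
  nlinarith [inv_pos.mpr hε]

section KLDivergence

variable {X : Type*} [MeasurableSpace X] {μ κ : Measure X}

lemma integral_abs_rnDeriv_sub_one_le [IsFiniteMeasure μ] [IsProbabilityMeasure κ]
    (h : InformationTheory.klDiv μ κ ≠ ∞) {ε : ℝ} (hε : 0 < ε) :
    ∫ x, |(μ.rnDeriv κ x).toReal - 1| ∂κ
      ≤ ε + (1 + ε⁻¹) * (InformationTheory.klDiv μ κ).toReal := by
  obtain ⟨hac, hllr⟩ := InformationTheory.klDiv_ne_top_iff.mp h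
  have hkl : Integrable (fun x ↦ klFun (μ.rnDeriv κ x).toReal) κ :=
    (integrable_klFun_rnDeriv_iff hac).mpr hllr
  rw [InformationTheory.toReal_klDiv_eq_integral_klFun hac]
  calc ∫ x, |(μ.rnDeriv κ x).toReal - 1| ∂κ
      ≤ ∫ x, (ε + (1 + ε⁻¹) * klFun (μ.rnDeriv κ x).toReal) ∂κ :=
        integral_mono (Measure.integrable_toReal_rnDeriv.sub (integrable_const 1)).abs
          ((integrable_const ε).add (hkl.const_mul _))
          fun x ↦ abs_sub_one_le_klFun ENNReal.toReal_nonneg hε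
    _ = ε + (1 + ε⁻¹) * ∫ x, klFun (μ.rnDeriv κ x).toReal ∂κ := by
        rw [integral_add (integrable_const ε) (hkl.const_mul _), integral_const_mul]
        simp

lemma integral_abs_rnDeriv_sub_one_le_sqrt [IsFiniteMeasure μ] [IsProbabilityMeasure κ]
    (h : InformationTheory.klDiv μ κ ≠ ∞) :
    ∫ x, |(μ.rnDeriv κ x).toReal - 1| ∂κ
      ≤ 2 * √(InformationTheory.klDiv μ κ).toReal + (InformationTheory.klDiv μ κ).toReal := by
  have hbound := fun ε (hε : 0 < ε) ↦ integral_abs_rnDeriv_sub_one_le h hε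
  have hK0 : 0 ≤ (InformationTheory.klDiv μ κ).toReal := ENNReal.toReal_nonneg
  generalize (InformationTheory.klDiv μ κ).toReal = K at hbound hK0 ⊢
  rcases hK0.eq_or_lt with rfl | hK
  · simpa using _root_.le_of_forall_pos_le_add fun ε hε ↦ by simpa using hbound ε hε
  · have hs : 0 < √K := Real.sqrt_pos.mpr hK
    calc ∫ x, |(μ.rnDeriv κ x).toReal - 1| ∂κ ≤ √K + (1 + (√K)⁻¹) * K := hbound _ hs
      _ = 2 * √K + K := by
          rw [add_mul, one_mul, inv_mul_eq_div, Real.div_sqrt]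
          ring

lemma klDiv_eq_coe_klDiv (μ ν : Measure X) [IsProbabilityMeasure μ] [IsProbabilityMeasure ν] :
    klDiv μ ν = (InformationTheory.klDiv μ ν : EReal) := by
  rw [klDiv]
  split_ifs with h
  · have hnonneg := integral_llr_add_sub_measure_univ_nonneg h.1 h.2
    rw [InformationTheory.klDiv_of_ac_of_integrable h.1 h.2, EReal.coe_ennreal_ofReal,
      max_eq_left hnonneg]
    simp [llr_def]
  · rw [InformationTheory.klDiv_eq_top_iff.mpr fun hac hint ↦ h ⟨hac, hint⟩]
    rfl

lemma klDiv_nonneg (μ ν : ProbabilityMeasure X) : 0 ≤ klDiv μ.toMeasure ν.toMeasure := by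
  rw [klDiv_eq_coe_klDiv]
  exact EReal.coe_ennreal_nonneg _

variable [TopologicalSpace X] [OpensMeasurableSpace X]

lemma abs_integral_sub_integral_le [IsFiniteMeasure μ] [IsFiniteMeasure κ] (hac : μ ≪ κ)
    (f : X →ᵇ ℝ) :
    |∫ x, f x ∂μ - ∫ x, f x ∂κ| ≤ ‖f‖ * ∫ x, |(μ.rnDeriv κ x).toReal - 1| ∂κ := by
  have hg : Integrable (fun x ↦ (μ.rnDeriv κ x).toReal - 1) κ :=
    Measure.integrable_toReal_rnDeriv.sub (integrable_const 1)
  have hchange : ∫ x, f x ∂μ - ∫ x, f x ∂κ = ∫ x, ((μ.rnDeriv κ x).toReal - 1) * f x ∂κ := by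
    rw [← integral_rnDeriv_smul hac, ← integral_sub _ (f.integrable κ)]
    · simp only [smul_eq_mul, sub_mul, one_mul]
    · exact (integrable_rnDeriv_smul_iff hac).mpr (f.integrable μ)
  rw [hchange, ← integral_const_mul, ← Real.norm_eq_abs]
  refine norm_integral_le_of_norm_le (hg.abs.const_mul _) (ae_of_all _ fun x ↦ ?_)
  rw [norm_mul, Real.norm_eq_abs, mul_comm]
  exact mul_le_mul_of_nonneg_right (f.norm_coe_le_norm x) (abs_nonneg _)

lemma ProbabilityMeasure.tendsto_of_tendsto_klDiv_zero {ι : Type*} {l : Filter ι}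
    {μ : ProbabilityMeasure X} {κ : ι → ProbabilityMeasure X}
    (h : Tendsto (fun i ↦ InformationTheory.klDiv μ.toMeasure (κ i).toMeasure) l (𝓝 0)) :
    Tendsto κ l (𝓝 μ) := by
  rw [ProbabilityMeasure.tendsto_iff_forall_integral_tendsto]
  intro f
  set K := fun i ↦ (InformationTheory.klDiv μ.toMeasure (κ i).toMeasure).toReal
  have hK : Tendsto K l (𝓝 0) := (ENNReal.tendsto_toReal ENNReal.zero_ne_top).comp h
  have hbound : Tendsto (fun i ↦ ‖f‖ * (2 * √(K i) + K i)) l (𝓝 0) := by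
    simpa using ((hK.sqrt.const_mul 2).add hK).const_mul ‖f‖
  rw [tendsto_iff_norm_sub_tendsto_zero]
  refine squeeze_zero' (Eventually.of_forall fun _ ↦ norm_nonneg _) ?_ hbound
  filter_upwards [h.eventually_ne ENNReal.zero_ne_top] with i hi
  rw [Real.norm_eq_abs, abs_sub_comm]
  exact (abs_integral_sub_integral_le (InformationTheory.klDiv_ne_top_iff.mp hi).1 f).trans
    (mul_le_mul_of_nonneg_left (integral_abs_rnDeriv_sub_one_le_sqrt hi) (norm_nonneg f))

lemma mem_of_iInf_klDiv_eq_zero {M : Set (ProbabilityMeasure X)} (hM : IsClosed M)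
    {μ : ProbabilityMeasure X} (h : ⨅ ν ∈ M, klDiv μ.toMeasure ν.toMeasure = 0) : μ ∈ M := by
  have hseq : ∀ n : ℕ, ∃ ν ∈ M, InformationTheory.klDiv μ.toMeasure ν.toMeasure < (n : ℝ≥0∞)⁻¹ := by
    intro n
    have hpos : (0 : EReal) < ((n : ℝ≥0∞)⁻¹ : ℝ≥0∞) :=
      EReal.coe_ennreal_pos.mpr (ENNReal.inv_pos.mpr (ENNReal.natCast_ne_top n))
    rw [← h] at hpos
    obtain ⟨ν, hlt⟩ := iInf_lt_iff.mp hpos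
    obtain ⟨hν, hlt⟩ := iInf_lt_iff.mp hlt
    exact ⟨ν, hν, by rwa [klDiv_eq_coe_klDiv, EReal.coe_ennreal_lt_coe_ennreal_iff] at hlt⟩
  choose ν hνM hν using hseq
  refine hM.mem_of_tendsto (ProbabilityMeasure.tendsto_of_tendsto_klDiv_zero (l := atTop) ?_)
    (Eventually.of_forall hνM)
  exact tendsto_of_tendsto_of_tendsto_of_le_of_le tendsto_const_nhds
    ENNReal.tendsto_inv_nat_nhds_zero (fun _ ↦ zero_le) fun n ↦ (hν n).le

end KLDivergence

section Midpoint

variable {X : Type*} [MeasurableSpace X]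

lemma midSet_comm (P Q : Set (ProbabilityMeasure X)) : midSet P Q = midSet Q P := by
  ext κ
  constructor <;> rintro ⟨μ, hμ, ν, hν, h⟩ <;> exact ⟨ν, hν, μ, hμ, by rw [h, add_comm]⟩

lemma self_subset_midSet (P : Set (ProbabilityMeasure X)) : P ⊆ midSet P P := fun μ hμ ↦
  ⟨μ, hμ, μ, hμ, by rw [← add_smul, ENNReal.inv_two_add_inv_two, one_smul]⟩

noncomputable def midPM (μ ν : ProbabilityMeasure X) : ProbabilityMeasure X :=
  ⟨(2:ℝ≥0∞)⁻¹ • μ.toMeasure + (2:ℝ≥0∞)⁻¹ • ν.toMeasure,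
    ⟨by simp [ENNReal.inv_two_add_inv_two]⟩⟩

lemma midSet_eq_image (P Q : Set (ProbabilityMeasure X)) :
    midSet P Q = (fun p ↦ midPM p.1 p.2) '' (P ×ˢ Q) := by
  ext κ
  constructor
  · rintro ⟨μ, hμ, ν, hν, h⟩
    exact ⟨(μ, ν), ⟨hμ, hν⟩, ProbabilityMeasure.toMeasure_injective h.symm⟩
  · rintro ⟨⟨μ, ν⟩, ⟨hμ, hν⟩, rfl⟩
    exact ⟨μ, hμ, ν, hν, rfl⟩

lemma ConvexPM.exists_smul_eq_add {B : Set (ProbabilityMeasure X)} (hB : ConvexPM B)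
    {t t' : ProbabilityMeasure X} (ht : t ∈ B) (ht' : t' ∈ B) {a b : ℝ≥0∞} (h0 : a + b ≠ 0)
    (htop : a + b ≠ ⊤) :
    ∃ τ ∈ B, (a + b) • τ.toMeasure = a • t.toMeasure + b • t'.toMeasure := by
  obtain ⟨τ, hτ, heq⟩ := hB t ht t' ht' (a / (a + b)) (b / (a + b))
    (by rw [ENNReal.div_add_div_same, ENNReal.div_self h0 htop])
  refine ⟨τ, hτ, ?_⟩
  rw [heq, smul_add, smul_smul, smul_smul, ENNReal.mul_div_cancel h0 htop,
    ENNReal.mul_div_cancel h0 htop]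

lemma two_smul_eq_add_of_eq_mid {μ m t : Measure X} (h : μ = (2:ℝ≥0∞)⁻¹ • m + (2:ℝ≥0∞)⁻¹ • t) :
    (2:ℝ≥0∞) • μ = m + t := by
  rw [h, smul_add, smul_smul, smul_smul, ENNReal.mul_inv_cancel two_ne_zero ENNReal.ofNat_ne_top,
    one_smul, one_smul]

lemma exists_smul_eq_add_smul_of_subset_midSet {A B : Set (ProbabilityMeasure X)}
    (hB : ConvexPM B) (h : A ⊆ midSet A B) {μ : ProbabilityMeasure X} (hμ : μ ∈ A) (n : ℕ) :
    ∃ k : ℕ, n ≤ k ∧ ∃ m ∈ A, ∃ t ∈ B,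
      ((k : ℝ≥0∞) + 1) • μ.toMeasure = m.toMeasure + (k : ℝ≥0∞) • t.toMeasure := by
  induction n with
  | zero =>
    obtain ⟨m, hm, t, ht, heq⟩ := h hμ
    exact ⟨1, zero_le_one, m, hm, t, ht, by rw [Nat.cast_one, one_smul, one_add_one_eq_two,
      two_smul_eq_add_of_eq_mid heq]⟩
  | succ n ih =>
    obtain ⟨k, hnk, m, hm, t, ht, heq⟩ := ih
    obtain ⟨m', hm', t', ht', hmid⟩ := h hm
    obtain ⟨τ, hτ, hτeq⟩ := hB.exists_smul_eq_add ht ht' (a := 2 * k) (b := 1) (by simp)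
      (by finiteness)
    refine ⟨2 * k + 1, by omega, m', hm', τ, hτ, ?_⟩
    push_cast
    calc (2 * (k : ℝ≥0∞) + 1 + 1) • μ.toMeasure = (2:ℝ≥0∞) • (((k : ℝ≥0∞) + 1) • μ.toMeasure) := by
          rw [smul_smul]; ring_nf
      _ = (2:ℝ≥0∞) • m.toMeasure + (2 * (k : ℝ≥0∞)) • t.toMeasure := by
          rw [heq, smul_add, smul_smul]
      _ = m'.toMeasure + (2 * (k : ℝ≥0∞) + 1) • τ.toMeasure := by
          rw [two_smul_eq_add_of_eq_mid hmid, hτeq, one_smul]; abel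

variable [TopologicalSpace X] [OpensMeasurableSpace X]

lemma continuous_midPM :
    Continuous (fun p : ProbabilityMeasure X × ProbabilityMeasure X ↦ midPM p.1 p.2) := by
  refine continuous_iff_continuousAt.mpr fun p ↦ ?_
  refine ProbabilityMeasure.tendsto_iff_forall_integral_tendsto.mpr fun f ↦ ?_
  have hint : ∀ q : ProbabilityMeasure X × ProbabilityMeasure X,
      ∫ x, f x ∂(midPM q.1 q.2).toMeasure
        = 2⁻¹ * ∫ x, f x ∂q.1.toMeasure + 2⁻¹ * ∫ x, f x ∂q.2.toMeasure := fun q ↦ by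
    rw [midPM, ProbabilityMeasure.coe_mk, integral_add_measure
      ((f.integrable _).smul_measure (by simp)) ((f.integrable _).smul_measure (by simp)),
      integral_smul_measure, integral_smul_measure]
    simp
  simp only [hint]
  have hf := ProbabilityMeasure.continuous_integral_boundedContinuousFunction f
  exact (((hf.comp continuous_fst).const_mul _).add
    ((hf.comp continuous_snd).const_mul _)).tendsto p

lemma isCompact_midSet {P Q : Set (ProbabilityMeasure X)} (hP : IsCompact P) (hQ : IsCompact Q) :
    IsCompact (midSet P Q) := by
  rw [midSet_eq_image]
  exact (hP.prod hQ).image continuous_midPM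

lemma abs_integral_sub_le_of_smul_eq_add_smul {μ m t : ProbabilityMeasure X} {k : ℕ} (hk : 0 < k)
    (h : ((k : ℝ≥0∞) + 1) • μ.toMeasure = m.toMeasure + (k : ℝ≥0∞) • t.toMeasure) (f : X →ᵇ ℝ) :
    |∫ x, f x ∂t.toMeasure - ∫ x, f x ∂μ.toMeasure| ≤ 2 * ‖f‖ / k := by
  have hint := congrArg (fun ρ ↦ ∫ x, f x ∂ρ) h
  simp only [integral_smul_measure, integral_add_measure (f.integrable _)
    ((f.integrable _).smul_measure (ENNReal.natCast_ne_top k))] at hint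
  have hk' : (0 : ℝ) < k := by exact_mod_cast hk
  have heq : ∫ x, f x ∂t.toMeasure - ∫ x, f x ∂μ.toMeasure
      = (∫ x, f x ∂μ.toMeasure - ∫ x, f x ∂m.toMeasure) / k := by
    field_simp
    simp only [ENNReal.toReal_add (ENNReal.natCast_ne_top k) ENNReal.one_ne_top,
      ENNReal.toReal_natCast, ENNReal.toReal_one, smul_eq_mul] at hint
    linarith
  rw [heq, abs_div, abs_of_pos hk']
  gcongr
  calc |∫ x, f x ∂μ.toMeasure - ∫ x, f x ∂m.toMeasure|
      ≤ ‖∫ x, f x ∂μ.toMeasure‖ + ‖∫ x, f x ∂m.toMeasure‖ := abs_sub _ _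
    _ ≤ ‖f‖ + ‖f‖ := add_le_add (f.norm_integral_le_norm _) (f.norm_integral_le_norm _)
    _ = 2 * ‖f‖ := by ring

lemma subset_of_subset_midSet {A B : Set (ProbabilityMeasure X)} (hBc : IsClosed B)
    (hB : ConvexPM B) (h : A ⊆ midSet A B) : A ⊆ B := by
  intro μ hμ
  choose k hk m _ t ht heq using exists_smul_eq_add_smul_of_subset_midSet hB h hμ
  refine hBc.mem_of_tendsto (?_ : Tendsto t atTop (𝓝 μ)) (Eventually.of_forall ht)
  refine ProbabilityMeasure.tendsto_iff_forall_integral_tendsto.mpr fun f ↦ ?_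
  have hk_top : Tendsto (fun n ↦ (k n : ℝ)) atTop atTop :=
    tendsto_natCast_atTop_atTop.comp (tendsto_atTop_mono hk tendsto_id)
  rw [tendsto_iff_norm_sub_tendsto_zero]
  refine squeeze_zero' (Eventually.of_forall fun _ ↦ norm_nonneg _) ?_
    ((tendsto_const_nhds (x := 2 * ‖f‖)).div_atTop hk_top)
  filter_upwards [eventually_ge_atTop 1] with n hn
  exact abs_integral_sub_le_of_smul_eq_add_smul (by have := hk n; omega) (heq n) f

end Midpoint

section GenKL

variable {X : Type*} [MeasurableSpace X]

lemma genKL_nonneg {P : Set (ProbabilityMeasure X)} (hP : P.Nonempty)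
    (M : Set (ProbabilityMeasure X)) : 0 ≤ genKL P M :=
  let ⟨μ, hμ⟩ := hP
  le_iSup₂_of_le μ hμ (le_iInf₂ fun ν _ ↦ klDiv_nonneg μ ν)

variable [TopologicalSpace X] [OpensMeasurableSpace X]

lemma genKL_eq_zero_iff_subset {P M : Set (ProbabilityMeasure X)} (hP : P.Nonempty)
    (hM : IsClosed M) :
    genKL P M = 0 ↔ P ⊆ M := by
  constructor
  · intro h μ hμ
    refine mem_of_iInf_klDiv_eq_zero hM (le_antisymm ?_ (le_iInf₂ fun ν _ ↦ klDiv_nonneg μ ν))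
    exact h ▸ le_iSup₂ (f := fun μ (_ : μ ∈ P) ↦ ⨅ ν ∈ M, klDiv μ.toMeasure ν.toMeasure) μ hμ
  · intro h
    refine le_antisymm (iSup₂_le fun μ hμ ↦ iInf₂_le_of_le μ (h hμ) ?_) (genKL_nonneg hP M)
    rw [klDiv_eq_coe_klDiv, InformationTheory.klDiv_self]
    rfl

end GenKL

lemma half_mul_add_half_mul_eq_zero_iff {a b : EReal} (ha : 0 ≤ a) (hb : 0 ≤ b) :
    ((1/2 : ℝ) : EReal) * a + ((1/2 : ℝ) : EReal) * b = 0 ↔ a = 0 ∧ b = 0 := by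
  have hhalf : (0 : EReal) < ((1/2 : ℝ) : EReal) := by exact_mod_cast one_half_pos
  rw [add_eq_zero_iff_of_nonneg (mul_nonneg hhalf.le ha) (mul_nonneg hhalf.le hb),
    mul_eq_zero, mul_eq_zero]
  simp

theorem genJS_eq_zero_iff {X : Type*} [MeasurableSpace X] [TopologicalSpace X]
    [PolishSpace X] [BorelSpace X] (P Q : Set (ProbabilityMeasure X))
    (hPne : P.Nonempty) (hQne : Q.Nonempty) (hPc : IsCompact P) (hQc : IsCompact Q)
    (hPconv : ConvexPM P) (hQconv : ConvexPM Q) :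
    genJS P Q = 0 ↔ P = Q := by
  have hM : IsClosed (midSet P Q) := (isCompact_midSet hPc hQc).isClosed
  rw [genJS, half_mul_add_half_mul_eq_zero_iff (genKL_nonneg hPne _) (genKL_nonneg hQne _),
    genKL_eq_zero_iff_subset hPne hM, genKL_eq_zero_iff_subset hQne hM]
  constructor
  · rintro ⟨hP, hQ⟩
    exact (subset_of_subset_midSet hQc.isClosed hQconv hP).antisymm
      (subset_of_subset_midSet hPc.isClosed hPconv (midSet_comm P Q ▸ hQ))
  · rintro rfl
    exact ⟨self_subset_midSet P, self_subset_midSet P⟩
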